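/- Let μ > 1, ρ ∈ (0,1), and suppose (ε_k) is a positive sequence with ε_{k+1} ≤ ε_k - ε_k^μ, ε_0 ∈ (0,1). Suppose u : B_{1/2} → ℝ and q is a quadratic polynomial with |u(x) - q(x)| ≤ C ε_k ρ^{2k} for all |x| ≤ ρ^k and all k ≥ 0. Then there exist constants C' > 0 and c > 0 (depending on C, μ, ρ, ε_0) such that |u(x) - q(x)| ≤ C' |x|² |log|x||^{-c} for all 0 < |x| < 1/2. -/

import Mathlib

/-!
Writing `δ_k = ε_k ^ (1 - μ)`, the recursion `ε_{k+1} ≤ ε_k (1 - ε_k ^ (μ - 1))` and the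
Bernoulli-type bound `(1 - t) ^ (-p) ≥ 1 + p t` give `δ_{k+1} ≥ δ_k + (μ - 1)`, so
`ε_k ≤ (1 + (μ - 1) k) ^ (-1 / (μ - 1))`. For `ρ ^ (k + 1) < |x| ≤ ρ ^ k` the scale index `k` is
comparable to `|log |x||` and `ρ ^ (2 k)` to `|x|²`, which turns the hypothesis at scale `k` into
the bound `C' |x|² |log |x|| ^ (-c)` with `c = 1 / (μ - 1)`.
-/

open Real

lemma one_add_mul_le_one_sub_rpow_neg {t p : ℝ} (ht : t < 1) (hp : 0 ≤ p) :
    1 + p * t ≤ (1 - t) ^ (-p) := by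
  have hpos : 0 < 1 - t := by linarith
  have hlog : log (1 - t) ≤ -t := by linarith [log_le_sub_one_of_pos hpos]
  rw [rpow_def_of_pos hpos]
  calc 1 + p * t ≤ exp (p * t) := by linarith [add_one_le_exp (p * t)]
    _ ≤ exp (log (1 - t) * -p) := exp_le_exp.mpr (by nlinarith)

lemma rpow_one_sub_add_le_of_le_sub_rpow {μ a b : ℝ} (hμ : 1 ≤ μ) (ha : 0 < a) (hb : 0 < b)
    (hab : b ≤ a - a ^ μ) : a ^ (1 - μ) + (μ - 1) ≤ b ^ (1 - μ) := by
  set t := a ^ (μ - 1)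
  have hmul : a ^ μ = a * t := by
    rw [← rpow_one_add' ha.le (by linarith), add_sub_cancel]
  have ht : t < 1 := by nlinarith
  have hinv : a ^ (1 - μ) * t = 1 := by
    rw [← rpow_add ha, sub_add_sub_cancel', sub_self, rpow_zero]
  calc a ^ (1 - μ) + (μ - 1) = a ^ (1 - μ) * (1 + (μ - 1) * t) := by
        linear_combination -(μ - 1) * hinv
    _ ≤ a ^ (1 - μ) * (1 - t) ^ (1 - μ) := by
        rw [show 1 - μ = -(μ - 1) by ring]
        gcongr
        exact one_add_mul_le_one_sub_rpow_neg ht (by linarith)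
    _ = (a * (1 - t)) ^ (1 - μ) := (mul_rpow ha.le (by linarith)).symm
    _ ≤ b ^ (1 - μ) := rpow_le_rpow_of_nonpos hb (by linarith) (by linarith)

section SlowDecay

variable {μ : ℝ} {ε : ℕ → ℝ} (hpos : ∀ k, 0 < ε k) (hdec : ∀ k, ε (k + 1) ≤ ε k - ε k ^ μ)
include hpos hdec

lemma rpow_one_sub_add_mul_le (hμ : 1 ≤ μ) (k : ℕ) :
    ε 0 ^ (1 - μ) + (μ - 1) * k ≤ ε k ^ (1 - μ) := by
  induction k with
  | zero => simp
  | succ k ih =>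
    have := rpow_one_sub_add_le_of_le_sub_rpow hμ (hpos k) (hpos (k + 1)) (hdec k)
    push_cast
    linarith

lemma le_one_add_mul_rpow_neg (hμ : 1 < μ) (h0 : ε 0 ≤ 1) (k : ℕ) :
    ε k ≤ (1 + (μ - 1) * k) ^ (-(μ - 1)⁻¹) := by
  have hμ' : 0 < μ - 1 := by linarith
  have hδ0 : 1 ≤ ε 0 ^ (1 - μ) :=
    one_le_rpow_of_pos_of_le_one_of_nonpos (hpos 0) h0 (by linarith)
  have hδ : 1 + (μ - 1) * k ≤ ε k ^ (1 - μ) := by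
    linarith [rpow_one_sub_add_mul_le hpos hdec hμ.le k]
  calc ε k = (ε k ^ (1 - μ)) ^ (-(μ - 1)⁻¹) := by
        rw [← rpow_mul (hpos k).le, show (1 - μ) * -(μ - 1)⁻¹ = 1 by field_simp; ring, rpow_one]
    _ ≤ (1 + (μ - 1) * k) ^ (-(μ - 1)⁻¹) :=
        rpow_le_rpow_of_nonpos (by positivity) hδ (neg_nonpos.mpr (inv_pos.mpr hμ').le)

end SlowDecay

lemma abs_log_le_of_pow_succ_lt {ρ r : ℝ} {k : ℕ} (hρ : 0 < ρ) (hr : r ≤ 1)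
    (hk : ρ ^ (k + 1) < r) : |log r| ≤ (k + 1) * -log ρ := by
  have hlog : (k + 1) * log ρ < log r := by
    have := log_lt_log (pow_pos hρ _) hk
    rwa [log_pow, Nat.cast_succ] at this
  rw [abs_of_nonpos (log_nonpos (by linarith [pow_pos hρ (k + 1)]) hr)]
  linarith

lemma min_one_div_mul_abs_log_le {ρ r a : ℝ} {k : ℕ} (hρ : ρ ∈ Set.Ioo (0 : ℝ) 1)
    (hr : r ≤ 1) (hk : ρ ^ (k + 1) < r) (ha : 0 ≤ a) :
    min 1 a / -log ρ * |log r| ≤ 1 + a * k := by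
  have hL : 0 < -log ρ := neg_pos.mpr (log_neg hρ.1 hρ.2)
  have hm : 0 ≤ min 1 a := le_min zero_le_one ha
  calc min 1 a / -log ρ * |log r| ≤ min 1 a / -log ρ * ((k + 1) * -log ρ) := by
        gcongr
        exact abs_log_le_of_pow_succ_lt hρ.1 hr hk
    _ = min 1 a * (k + 1) := by rw [mul_comm _ (-log ρ), ← mul_assoc, div_mul_cancel₀ _ hL.ne']
    _ ≤ 1 + a * k := by
        nlinarith [min_le_left 1 a, min_le_right 1 a, (Nat.cast_nonneg k : (0 : ℝ) ≤ k)]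

lemma pow_two_mul_le_sq_div {ρ r : ℝ} {k : ℕ} (hρ : 0 < ρ) (hk : ρ ^ (k + 1) < r) :
    ρ ^ (2 * k) ≤ r ^ 2 / ρ ^ 2 := by
  rw [le_div_iff₀ (by positivity), ← pow_add, show 2 * k + 2 = 2 * (k + 1) by ring, pow_mul']
  exact pow_le_pow_left₀ (by positivity) hk.le 2

theorem stmt_10_general (d : ℕ) (μ ρ C : ℝ) (hμ : 1 < μ)
    (hρ : ρ ∈ Set.Ioo (0 : ℝ) 1) (hC : 0 < C)
    (ε : ℕ → ℝ) (hεpos : ∀ k, 0 < ε k) (hε0 : ε 0 < 1)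
    (hdec : ∀ k, ε (k + 1) ≤ ε k - ε k ^ μ)
    (u : EuclideanSpace ℝ (Fin d) → ℝ) (q : EuclideanSpace ℝ (Fin d) → ℝ)
    (hu : ∀ k : ℕ, ∀ x, ‖x‖ ≤ ρ ^ k → |u x - q x| ≤ C * ε k * ρ ^ (2 * k)) :
    ∃ C' > (0 : ℝ), ∃ c > (0 : ℝ), ∀ x, 0 < ‖x‖ → ‖x‖ < 1 / 2 →
      |u x - q x| ≤ C' * ‖x‖ ^ 2 * |Real.log ‖x‖| ^ (-c) := by
  obtain ⟨hρ0, hρ1⟩ := hρ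
  have hL : 0 < -log ρ := neg_pos.mpr (log_neg hρ0 hρ1)
  have hm : 0 < min 1 (μ - 1) := lt_min one_pos (by linarith)
  have hc : 0 < (μ - 1)⁻¹ := inv_pos.mpr (by linarith)
  set b := min 1 (μ - 1) / -log ρ
  refine ⟨C / ρ ^ 2 * b ^ (-(μ - 1)⁻¹), by positivity, (μ - 1)⁻¹, hc, fun x hx0 hx1 => ?_⟩
  obtain ⟨k, hk_lt, hk_le⟩ := exists_nat_pow_near_of_lt_one hx0 (by linarith) hρ0 hρ1
  have hlog : 0 < |log ‖x‖| := abs_pos.mpr (log_neg hx0 (by linarith)).ne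
  have hε : ε k ≤ b ^ (-(μ - 1)⁻¹) * |log ‖x‖| ^ (-(μ - 1)⁻¹) := by
    rw [← mul_rpow (by positivity) hlog.le]
    refine (le_one_add_mul_rpow_neg hεpos hdec hμ hε0.le k).trans ?_
    refine rpow_le_rpow_of_nonpos (by positivity) ?_ (neg_nonpos.mpr hc.le)
    exact min_one_div_mul_abs_log_le ⟨hρ0, hρ1⟩ (by linarith) hk_lt (by linarith)
  calc |u x - q x| ≤ C * ε k * ρ ^ (2 * k) := hu k x hk_le
    _ ≤ C * (b ^ (-(μ - 1)⁻¹) * |log ‖x‖| ^ (-(μ - 1)⁻¹)) * (‖x‖ ^ 2 / ρ ^ 2) := by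
        gcongr
        exact pow_two_mul_le_sq_div hρ0 hk_lt
    _ = C / ρ ^ 2 * b ^ (-(μ - 1)⁻¹) * ‖x‖ ^ 2 * |log ‖x‖| ^ (-(μ - 1)⁻¹) := by ring

/-- Slow improvement `ε_{k+1} ≤ ε_k - ε_k^μ` across dyadic scales yields the logarithmic
modulus: if `|u - q| ≤ C ε_k ρ^{2k}` on `B_{ρ^k}` for all `k`, then
`|u - q| ≤ C' |x|² |log |x||^{-c}` for `0 < |x| < 1/2`. -/
theorem stmt_10 (d : ℕ) (μ ρ C : ℝ) (hμ : 1 < μ)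
    (hρ : ρ ∈ Set.Ioo (0 : ℝ) 1) (hC : 0 < C)
    (ε : ℕ → ℝ) (hεpos : ∀ k, 0 < ε k) (hε0 : ε 0 < 1)
    (hdec : ∀ k, ε (k + 1) ≤ ε k - ε k ^ μ)
    (u : EuclideanSpace ℝ (Fin d) → ℝ) (q : EuclideanSpace ℝ (Fin d) → ℝ)
    (hquad : ∃ (A : Matrix (Fin d) (Fin d) ℝ) (b : Fin d → ℝ) (c : ℝ), ∀ x,
      q x = (1 / 2) * (∑ i, ∑ j, A i j * x i * x j) + (∑ i, b i * x i) + c)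
    (hu : ∀ k : ℕ, ∀ x, ‖x‖ ≤ ρ ^ k → |u x - q x| ≤ C * ε k * ρ ^ (2 * k)) :
    ∃ C' > (0 : ℝ), ∃ c > (0 : ℝ), ∀ x, 0 < ‖x‖ → ‖x‖ < 1 / 2 →
      |u x - q x| ≤ C' * ‖x‖ ^ 2 * |Real.log ‖x‖| ^ (-c) :=
  stmt_10_general d μ ρ C hμ hρ hC ε hεpos hε0 hdec u q hu
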